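/- Let v ∈ S_d, a_n^{(1)}(v) := g_0^v(S_{n+d-1})/(n+d-1)!, and β_{ℓ-1}(v) := a_{ℓ-1}^{(1)}(v) - a_ℓ^{(1)}(v). Fix ℓ ≥ 2. Then for all n > ℓ + 2d: 0 ≤ a_n^{(1)}(v) - a_{n-1}^{(1)}(v) + β_{ℓ-1}(v) · a_{n-ℓ-d+1}^{(1)}(v) ≤ ((d-1)/d!) · a_{n-ℓ-2d+2}^{(1)}(v). -/

import Mathlib

open Finset MeasureTheory Polynomial

attribute [local instance] Classical.propDecidable

/-- `w` (restricted to positions `i, i+1, ..., i+d-1`) is a consecutive occurrence of the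
pattern `v` (whose entries are `v 0, ..., v (d-1)`), i.e. the window is order-isomorphic
(respecting equalities) to the pattern. -/
def consecOcc {α : Type*} [LinearOrder α] (d : ℕ) (v : ℕ → ℕ) (w : ℕ → α) (i : ℕ) : Prop :=
  ∀ p q, p < d → q < d →
    ((w (i + p) < w (i + q) ↔ v p < v q) ∧ (w (i + p) = w (i + q) ↔ v p = v q))

/-- number of consecutive occurrences of the pattern `v` of length `d` in the word `w`
of length `n`. -/
noncomputable def conCount {α : Type*} [LinearOrder α] (d n : ℕ) (v : ℕ → ℕ) (w : ℕ → α) : ℕ :=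
  ((Finset.range n).filter (fun i => i + d ≤ n ∧ consecOcc d v w i)).card

/-- the word (ℕ-valued, 0-indexed) associated with a permutation of `Fin n`. -/
def permWord {n : ℕ} (σ : Equiv.Perm (Fin n)) : ℕ → ℕ :=
  fun j => if h : j < n then (σ ⟨j, h⟩ : ℕ) else 0

/-- `g_r^v(S_n)`: number of permutations of length `n` with exactly `r` consecutive
occurrences of the pattern `v` (of length `d`). -/
noncomputable def gPerm (d : ℕ) (v : ℕ → ℕ) (n r : ℕ) : ℕ :=
  Nat.card {σ : Equiv.Perm (Fin n) // conCount d n v (permWord σ) = r}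

/-- the word (ℕ-valued, 0-indexed) associated with a `k`-ary word of length `n`. -/
def wordFn {k n : ℕ} (w : Fin n → Fin k) : ℕ → ℕ :=
  fun j => if h : j < n then (w ⟨j, h⟩ : ℕ) else 0

/-- `g_r^v([k]^n)`: number of `k`-ary words of length `n` with exactly `r` consecutive
occurrences of the pattern `v` (of length `d`). -/
noncomputable def gWord (d k n r : ℕ) (v : ℕ → ℕ) : ℕ :=
  Nat.card {w : Fin n → Fin k // conCount d n v (wordFn w) = r}

/-- `i` is in the overlap set `O_v` of the pattern `v` of length `d`:
`1 ≤ i < d` and the first `i` entries have the same relative order as the last `i` entries. -/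
def inOverlap (d : ℕ) (v : ℕ → ℕ) (i : ℕ) : Prop :=
  1 ≤ i ∧ i < d ∧ ∀ p q, p < i → q < i → (v p < v q ↔ v (d - i + p) < v (d - i + q))

/-!
Work with a uniform random permutation `σ` of length `N = n + d - 1`, in which an occurrence of
`v` can start at positions `0, …, n - 1`. Let `C` be the event that the first occurrence starts at
`n - 1`, and `D` the event that there is an occurrence at `n - 1` but none starting in
`[0, n - ℓ - d]` or in `[n - ℓ, n - 2]`. Then `P(C) = a_{n-1} - a_n`. The two forbidden blocks of
`D` involve disjoint sets of entries, and the patterns of `σ` on disjoint sets of positions are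
independent and uniform, so `P(D) = a_{n-ℓ-d+1} (a_{ℓ-1} - a_ℓ)`. Finally `C ⊆ D`, and a
permutation in `D \ C` has no occurrence starting in `[0, n - ℓ - 2d + 1]` but one starting at some
`j ∈ [n - ℓ - d + 1, n - ℓ)`; by independence again each of these `d - 1` values of `j` contributes
`a_{n-ℓ-2d+2} / d!`.
-/

open Equiv Function

namespace ConsecutivePattern

section UniformProb

variable {α : Type*} [Fintype α]

noncomputable def uniformProb (P : α → Prop) : ℝ :=
  (#{x | P x} : ℝ) / Fintype.card α

lemma uniformProb_nonneg (P : α → Prop) : 0 ≤ uniformProb P := by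
  unfold uniformProb
  positivity

lemma uniformProb_and_add_and_not (P Q : α → Prop) :
    uniformProb (fun x => P x ∧ Q x) + uniformProb (fun x => P x ∧ ¬ Q x) = uniformProb P := by
  simp only [uniformProb, ← add_div, ← Finset.filter_filter]
  exact_mod_cast congrArg (fun k : ℕ => (k : ℝ) / Fintype.card α)
    (Finset.card_filter_add_card_filter_not (s := {x | P x}) Q)

lemma uniformProb_eq_const (a : α) : uniformProb (· = a) = 1 / Fintype.card α := by
  rw [uniformProb, Finset.card_eq_one.2 ⟨a, by ext; simp⟩, Nat.cast_one]

lemma uniformProb_and_not_of_imp {P Q : α → Prop} (h : ∀ x, Q x → P x) :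
    uniformProb (fun x => P x ∧ ¬ Q x) = uniformProb P - uniformProb Q := by
  rw [← uniformProb_and_add_and_not P Q]
  simp only [show ∀ x, P x ∧ Q x ↔ Q x from fun x => and_iff_right_of_imp (h x)]
  ring

lemma uniformProb_mono {P Q : α → Prop} (h : ∀ x, P x → Q x) :
    uniformProb P ≤ uniformProb Q := by
  unfold uniformProb
  gcongr with x
  exact h x

lemma uniformProb_exists_le {ι : Type*} (J : Finset ι) (P : ι → α → Prop) :
    uniformProb (fun x => ∃ j ∈ J, P j x) ≤ ∑ j ∈ J, uniformProb (P j) := by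
  simp only [uniformProb, ← Finset.sum_div]
  gcongr
  calc ((#{x | ∃ j ∈ J, P j x} : ℕ) : ℝ) = #(J.biUnion fun j => {x | P j x}) := by
        congr 2; ext x; simp
    _ ≤ ∑ j ∈ J, (#{x | P j x} : ℝ) := by exact_mod_cast Finset.card_biUnion_le

lemma uniformProb_prod {β : Type*} [Fintype β] (P : α → Prop) (Q : β → Prop) :
    uniformProb (fun x : α × β => P x.1 ∧ Q x.2) = uniformProb P * uniformProb Q := by
  simp only [uniformProb, Fintype.card_prod, ← Finset.univ_product_univ]
  rw [Finset.filter_product, Finset.card_product]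
  push_cast
  ring

/-- Right translations by `R g` permute the fibres of `F`, so all fibres have the same size. -/
lemma uniformProb_comp_of_equivariant {G H : Type*} [Group G] [Group H] [Fintype G] [Fintype H]
    (F : H → G) (R : G → H) (hFR : ∀ x g, F (x * R g) = F x * g) (P : G → Prop) :
    uniformProb (fun x => P (F x)) = uniformProb P := by
  have hfiber (g : G) : #{x | F x = g} = #{x | F x = 1} := by
    refine Finset.card_nbij' (· * (R g)⁻¹) (· * R g) ?_ ?_ ?_ ?_
    · intro x hx
      have := hFR (x * (R g)⁻¹) g
      simp_all
    · intro x hx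
      simp_all
    · intro x _; simp
    · intro x _; simp
  have hcount (Q : G → Prop) : #{x | Q (F x)} = #{g | Q g} * #{x | F x = 1} := by
    rw [Finset.card_eq_sum_card_fiberwise (f := F) (t := {g | Q g}) (fun x hx => by simpa using hx)]
    simp_rw [Finset.filter_filter]
    rw [Finset.card_eq_sum_ones {g | Q g}, Finset.sum_mul, one_mul]
    refine Finset.sum_congr rfl fun g hg => ?_
    rw [← hfiber g]
    congr 1; ext x; simp only [Finset.mem_filter, Finset.mem_univ, true_and] at hg ⊢
    exact ⟨fun h => h.2, fun h => ⟨h ▸ hg, h⟩⟩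
  have hone : 0 < #{x | F x = 1} := by
    rw [← hfiber (F 1)]; exact Finset.card_pos.2 ⟨1, by simp⟩
  have hcard : Fintype.card H = Fintype.card G * #{x | F x = 1} := by
    simpa using hcount fun _ => True
  simp only [uniformProb, hcount, hcard]
  push_cast
  field_simp

end UniformProb

section Standardization

lemma perm_eq_of_forall_lt_iff {t : ℕ} {ρ ρ' : Perm (Fin t)}
    (h : ∀ p q, ρ p < ρ q ↔ ρ' p < ρ' q) : ρ = ρ' := by
  have hmono : StrictMono (ρ.symm.trans ρ') := fun x y hxy => by
    simpa using (h (ρ.symm x) (ρ.symm y)).1 (by simpa using hxy)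
  have hid := congrArg DFunLike.coe
    (Subsingleton.elim (hmono.orderIsoOfSurjective _ (Equiv.surjective _)) (OrderIso.refl _))
  ext x : 1
  simpa using (congrFun hid (ρ x)).symm

variable {α : Type*} [LinearOrder α] {t : ℕ}

noncomputable def stdPerm (f : Fin t → α) (hf : Injective f) : Perm (Fin t) :=
  (Equiv.ofInjective f hf).trans
    (Fintype.orderIsoFinOfCardEq (Set.range f) (Set.card_range_of_injective hf |>.trans
      (Fintype.card_fin t))).symm.toEquiv

lemma stdPerm_lt_iff (f : Fin t → α) (hf : Injective f) (p q : Fin t) :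
    stdPerm f hf p < stdPerm f hf q ↔ f p < f q := by
  simp [stdPerm]
  rfl

end Standardization

section Windows

variable {N : ℕ} (s t : ℕ) (h : s + t ≤ N)

def windowEmb : Fin t ↪ Fin N :=
  ⟨fun p => ⟨s + p, by omega⟩, fun p q hpq => by simpa [Fin.ext_iff] using hpq⟩

@[simp]
lemma val_windowEmb (p : Fin t) : (windowEmb s t h p : ℕ) = s + p := rfl

noncomputable def windowPattern (σ : Perm (Fin N)) : Perm (Fin t) :=
  stdPerm (σ ∘ windowEmb s t h) (σ.injective.comp (windowEmb s t h).injective)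

noncomputable def windowPerm (ρ : Perm (Fin t)) : Perm (Fin N) :=
  ρ.extendDomain (windowEmb s t h).toEquivRange

lemma windowPattern_lt_iff (σ : Perm (Fin N)) (p q : Fin t) :
    windowPattern s t h σ p < windowPattern s t h σ q ↔
      σ (windowEmb s t h p) < σ (windowEmb s t h q) :=
  stdPerm_lt_iff _ _ p q

lemma windowPerm_windowEmb (ρ : Perm (Fin t)) (p : Fin t) :
    windowPerm s t h ρ (windowEmb s t h p) = windowEmb s t h (ρ p) :=
  Perm.extendDomain_apply_image ρ _ p

lemma windowPerm_apply_of_notMem (ρ : Perm (Fin t)) {j : Fin N}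
    (hj : j ∉ Set.range (windowEmb s t h)) : windowPerm s t h ρ j = j :=
  Perm.extendDomain_apply_not_subtype ρ _ hj

lemma windowPattern_mul_windowPerm (σ : Perm (Fin N)) (ρ : Perm (Fin t)) :
    windowPattern s t h (σ * windowPerm s t h ρ) = windowPattern s t h σ * ρ :=
  perm_eq_of_forall_lt_iff fun p q => by
    simp only [windowPattern_lt_iff, Perm.mul_apply, windowPerm_windowEmb]

variable {s t h}

lemma windowPattern_mul_windowPerm_of_disjoint {s' t' : ℕ} (h' : s' + t' ≤ N)
    (hdisj : s + t ≤ s' ∨ s' + t' ≤ s) (σ : Perm (Fin N)) (ρ : Perm (Fin t')) :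
    windowPattern s t h (σ * windowPerm s' t' h' ρ) = windowPattern s t h σ := by
  have hfix (p : Fin t) : windowPerm s' t' h' ρ (windowEmb s t h p) = windowEmb s t h p :=
    windowPerm_apply_of_notMem _ _ _ _ fun ⟨q, hq⟩ => by
      have := p.2
      have := q.2
      simp only [Fin.ext_iff, val_windowEmb] at hq
      omega
  exact perm_eq_of_forall_lt_iff fun p q => by
    simp only [windowPattern_lt_iff, Perm.mul_apply, hfix]

lemma uniformProb_windowPattern (P : Perm (Fin t) → Prop) :
    uniformProb (fun σ : Perm (Fin N) => P (windowPattern s t h σ)) = uniformProb P :=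
  uniformProb_comp_of_equivariant _ _ (windowPattern_mul_windowPerm s t h) P

lemma uniformProb_windowPattern_and_windowPattern {s' t' : ℕ} (h' : s' + t' ≤ N)
    (hdisj : s + t ≤ s') (P : Perm (Fin t) → Prop) (Q : Perm (Fin t') → Prop) :
    uniformProb (fun σ : Perm (Fin N) => P (windowPattern s t h σ) ∧ Q (windowPattern s' t' h' σ))
      = uniformProb P * uniformProb Q := by
  rw [← uniformProb_prod]
  refine uniformProb_comp_of_equivariant
    (fun σ => (windowPattern s t h σ, windowPattern s' t' h' σ))
    (fun ρ => windowPerm s t h ρ.1 * windowPerm s' t' h' ρ.2) (fun σ ρ => ?_)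
    (fun x => P x.1 ∧ Q x.2)
  rw [← mul_assoc, windowPattern_mul_windowPerm_of_disjoint h' (.inl hdisj),
    windowPattern_mul_windowPerm, windowPattern_mul_windowPerm,
    windowPattern_mul_windowPerm_of_disjoint h (.inr hdisj)]
  rfl

end Windows

section Occurrences

variable {d : ℕ} {v : ℕ → ℕ}

/-- In a linear order equality is determined by `<`, so the relative order of two windows alone
decides whether both are occurrences of `v`. -/
lemma consecOcc_iff_of_lt_iff {β γ : Type*} [LinearOrder β] [LinearOrder γ] {u : ℕ → β}
    {u' : ℕ → γ} {i j : ℕ}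
    (h : ∀ p q, p < d → q < d → (u (i + p) < u (i + q) ↔ u' (j + p) < u' (j + q))) :
    consecOcc d v u i ↔ consecOcc d v u' j := by
  have heq (p q) (hp : p < d) (hq : q < d) : u (i + p) = u (i + q) ↔ u' (j + p) = u' (j + q) := by
    rw [le_antisymm_iff, le_antisymm_iff, ← not_lt, ← not_lt, ← not_lt, ← not_lt, h p q hp hq,
      h q p hq hp]
  unfold consecOcc
  exact forall₄_congr fun p q hp hq => by rw [h p q hp hq, heq p q hp hq]

lemma permWord_of_lt {n j : ℕ} (σ : Perm (Fin n)) (hj : j < n) : permWord σ j = σ ⟨j, hj⟩ :=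
  dif_pos hj

lemma consecOcc_windowPattern_iff {N s t i : ℕ} (h : s + t ≤ N) (σ : Perm (Fin N))
    (hi : i + d ≤ t) :
    consecOcc d v (permWord (windowPattern s t h σ)) i ↔ consecOcc d v (permWord σ) (s + i) := by
  refine consecOcc_iff_of_lt_iff fun p q hp hq => ?_
  rw [permWord_of_lt _ (by omega), permWord_of_lt _ (by omega), permWord_of_lt _ (by omega),
    permWord_of_lt _ (by omega), Fin.val_fin_lt, Fin.val_fin_lt, windowPattern_lt_iff]
  simp only [add_assoc]
  rfl

end Occurrences

lemma consecOcc_permWord_iff_eq {d : ℕ} (v τ : Perm (Fin d)) :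
    consecOcc d (permWord v) (permWord τ) 0 ↔ τ = v := by
  constructor
  · intro hocc
    refine perm_eq_of_forall_lt_iff fun p q => ?_
    have := (hocc p q p.2 q.2).1
    simpa [permWord_of_lt _ p.2, permWord_of_lt _ q.2, Fin.val_fin_lt] using this
  · rintro rfl p q _ _
    simp

section Avoidance

variable {d : ℕ} {v : ℕ → ℕ}

/-- Involves only the entries of `u` in positions `s, …, s + m + d - 2`. -/
def AvoidsOn (d : ℕ) (v u : ℕ → ℕ) (s m : ℕ) : Prop :=
  ∀ i < m, ¬ consecOcc d v u (s + i)

lemma AvoidsOn.mono {u : ℕ → ℕ} {s m s' m' : ℕ} (h : AvoidsOn d v u s m) (hs : s ≤ s')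
    (hm : s' + m' ≤ s + m) : AvoidsOn d v u s' m' := fun i hi => by
  simpa [show s' + i = s + (s' - s + i) by omega] using h (s' - s + i) (by omega)

lemma avoidsOn_add_one_iff {u : ℕ → ℕ} {s k : ℕ} :
    AvoidsOn d v u s (k + 1) ↔ AvoidsOn d v u s k ∧ ¬ consecOcc d v u (s + k) := by
  simp only [AvoidsOn, Nat.forall_lt_succ_right]

lemma exists_consecOcc_of_not_avoidsOn {u : ℕ → ℕ} {m s k : ℕ} (h₁ : AvoidsOn d v u 0 m)
    (h₂ : AvoidsOn d v u s k) (h : ¬ AvoidsOn d v u 0 (s + k)) :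
    ∃ j ∈ Finset.Ico m s, consecOcc d v u j := by
  simp only [AvoidsOn, not_forall, not_not, zero_add] at h
  obtain ⟨j, hj, hocc⟩ := h
  refine ⟨j, Finset.mem_Ico.2 ⟨?_, ?_⟩, hocc⟩
  · by_contra! hjm
    exact h₁ j hjm (by simpa using hocc)
  · by_contra! hsj
    exact h₂ (j - s) (by omega) (by simpa [show s + (j - s) = j by omega] using hocc)

lemma avoidsOn_windowPattern_iff {N s t m : ℕ} (h : s + t ≤ N) (σ : Perm (Fin N))
    (hm : m + d - 1 ≤ t) :
    AvoidsOn d v (permWord (windowPattern s t h σ)) 0 m ↔ AvoidsOn d v (permWord σ) s m :=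
  forall₂_congr fun i hi => by rw [zero_add, consecOcc_windowPattern_iff h σ (by omega)]

/-- The paper's `a_k^{(1)}(v)`; a permutation of length `k + d - 1` has `k` windows of length `d`.
-/
noncomputable def avoidProb (d : ℕ) (v : ℕ → ℕ) (k : ℕ) : ℝ :=
  gPerm d v (k + d - 1) 0 / (k + d - 1).factorial

lemma avoidProb_eq_uniformProb (hd : 1 ≤ d) (m : ℕ) :
    avoidProb d v m =
      uniformProb (fun τ : Perm (Fin (m + d - 1)) => AvoidsOn d v (permWord τ) 0 m) := by
  rw [avoidProb, uniformProb, Fintype.card_perm, Fintype.card_fin, gPerm, Nat.card_eq_fintype_card,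
    Fintype.card_subtype]
  congr 3
  ext τ
  simp only [conCount, Finset.card_eq_zero, Finset.filter_eq_empty_iff, Finset.mem_range,
    AvoidsOn, zero_add, Finset.mem_filter, Finset.mem_univ, true_and, not_and]
  exact ⟨fun H i hi => H (by omega) (by omega), fun H i _ hi => H i (by omega)⟩

lemma uniformProb_avoidsOn (hd : 1 ≤ d) {N s m : ℕ} (h : s + (m + d - 1) ≤ N) :
    uniformProb (fun σ : Perm (Fin N) => AvoidsOn d v (permWord σ) s m) = avoidProb d v m := by
  rw [avoidProb_eq_uniformProb hd, ← uniformProb_windowPattern (h := h)]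
  simp only [avoidsOn_windowPattern_iff h _ le_rfl]

lemma uniformProb_avoidsOn_and_windowPattern (hd : 1 ≤ d) {N m s t : ℕ} (hs : m + d - 1 ≤ s)
    (h : s + t ≤ N) (Q : Perm (Fin t) → Prop) :
    uniformProb (fun σ : Perm (Fin N) => AvoidsOn d v (permWord σ) 0 m ∧ Q (windowPattern s t h σ))
      = avoidProb d v m * uniformProb Q := by
  rw [avoidProb_eq_uniformProb hd, ← uniformProb_windowPattern_and_windowPattern
    (h := show 0 + (m + d - 1) ≤ N by omega) h (by omega)]
  simp only [avoidsOn_windowPattern_iff _ _ le_rfl]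

lemma uniformProb_avoidsOn_and_consecOcc (hd : 1 ≤ d) {N s k : ℕ} (h : s + k + d ≤ N) :
    uniformProb (fun σ : Perm (Fin N) =>
        AvoidsOn d v (permWord σ) s k ∧ consecOcc d v (permWord σ) (s + k))
      = avoidProb d v k - avoidProb d v (k + 1) := by
  rw [← uniformProb_avoidsOn hd (s := s) (m := k) (N := N) (by omega),
    ← uniformProb_avoidsOn hd (s := s) (m := k + 1) (N := N) (by omega), eq_sub_iff_add_eq]
  simp only [avoidsOn_add_one_iff]
  exact uniformProb_and_add_and_not _ _

lemma uniformProb_avoidsOn_and_avoidsOn_and_consecOcc (hd : 1 ≤ d) {N m s k : ℕ}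
    (hs : m + d - 1 ≤ s) (h : s + k + d ≤ N) :
    uniformProb (fun σ : Perm (Fin N) => AvoidsOn d v (permWord σ) 0 m ∧
        AvoidsOn d v (permWord σ) s k ∧ consecOcc d v (permWord σ) (s + k))
      = avoidProb d v m * (avoidProb d v k - avoidProb d v (k + 1)) := by
  have hw : s + (k + d) ≤ N := by omega
  rw [← uniformProb_avoidsOn_and_consecOcc hd (s := 0) (show 0 + k + d ≤ k + d by omega),
    ← uniformProb_avoidsOn_and_windowPattern hd hs hw]
  simp only [avoidsOn_windowPattern_iff hw _ (show k + d - 1 ≤ k + d by omega),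
    consecOcc_windowPattern_iff hw _ le_rfl, zero_add]

end Avoidance

lemma uniformProb_avoidsOn_and_consecOcc_of_le {d : ℕ} (hd : 1 ≤ d) (v : Perm (Fin d)) {N m j : ℕ}
    (hj : m + d - 1 ≤ j) (h : j + d ≤ N) :
    uniformProb (fun σ : Perm (Fin N) =>
        AvoidsOn d (permWord v) (permWord σ) 0 m ∧ consecOcc d (permWord v) (permWord σ) j)
      = avoidProb d (permWord v) m / d.factorial := by
  have hv : uniformProb (· = v) = 1 / d.factorial := by
    rw [uniformProb_eq_const, Fintype.card_perm, Fintype.card_fin]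
  rw [div_eq_mul_one_div, ← hv, ← uniformProb_avoidsOn_and_windowPattern hd hj h]
  simp only [← consecOcc_permWord_iff_eq, consecOcc_windowPattern_iff h _ (zero_add d).le,
    add_zero]

end ConsecutivePattern

open ConsecutivePattern

/-- For any pattern `v ∈ S_d`, `a_n^{(1)}(v) = g_0^v(S_{n+d-1})/(n+d-1)!`,
`β_{ℓ-1}(v) = a_{ℓ-1}^{(1)}(v) - a_ℓ^{(1)}(v)`, `ℓ ≥ 2`, and `n > ℓ + 2d`:
`0 ≤ a_n - a_{n-1} + β_{ℓ-1} a_{n-ℓ-d+1} ≤ ((d-1)/d!) a_{n-ℓ-2d+2}`. -/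
theorem a_recursion_inequality (d : ℕ) (hd : 1 ≤ d) (v : Equiv.Perm (Fin d))
    (a : ℕ → ℝ)
    (ha : ∀ k : ℕ, a k =
      (gPerm d (permWord v) (k + d - 1) 0 : ℝ) / (Nat.factorial (k + d - 1)))
    (ℓ : ℕ) (hℓ : 2 ≤ ℓ) (n : ℕ) (hn : ℓ + 2 * d < n) :
    0 ≤ a n - a (n - 1) + (a (ℓ - 1) - a ℓ) * a (n - ℓ - d + 1) ∧
      a n - a (n - 1) + (a (ℓ - 1) - a ℓ) * a (n - ℓ - d + 1) ≤
        ((d : ℝ) - 1) / (Nat.factorial d) * a (n - ℓ - 2 * d + 2) := by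
  obtain rfl : a = avoidProb d (permWord v) := funext ha
  set a := avoidProb d (permWord v)
  let avoids (σ : Perm (Fin (n + d - 1))) := AvoidsOn d (permWord v) (permWord σ)
  let occ (σ : Perm (Fin (n + d - 1))) := consecOcc d (permWord v) (permWord σ)
  let C σ := avoids σ 0 (n - 1) ∧ occ σ (n - 1)
  let D σ := avoids σ 0 (n - ℓ - d + 1) ∧ avoids σ (n - ℓ) (ℓ - 1) ∧ occ σ (n - 1)
  have hC : uniformProb C = a (n - 1) - a n := by
    simpa [Nat.sub_add_cancel (by omega : 1 ≤ n)] using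
      uniformProb_avoidsOn_and_consecOcc hd (v := permWord v) (s := 0) (k := n - 1)
        (N := n + d - 1) (by omega)
  have hD : uniformProb D = a (n - ℓ - d + 1) * (a (ℓ - 1) - a ℓ) := by
    simpa [Nat.sub_add_cancel (by omega : 1 ≤ ℓ), show n - ℓ + (ℓ - 1) = n - 1 by omega] using
      uniformProb_avoidsOn_and_avoidsOn_and_consecOcc hd (N := n + d - 1)
        (m := n - ℓ - d + 1) (s := n - ℓ) (k := ℓ - 1) (by omega) (by omega)
  have hDC : uniformProb (fun σ => D σ ∧ ¬ C σ) = uniformProb D - uniformProb C :=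
    uniformProb_and_not_of_imp fun σ ⟨hσ, hocc⟩ =>
      ⟨hσ.mono le_rfl (by omega), hσ.mono (by omega) (by omega), hocc⟩
  have hE : ∀ σ, D σ ∧ ¬ C σ →
      ∃ j ∈ Finset.Ico (n - ℓ - d + 1) (n - ℓ), avoids σ 0 (n - ℓ - 2 * d + 2) ∧ occ σ j := by
    rintro σ ⟨⟨hσ₁, hσ₂, hocc⟩, hnC⟩
    have : ¬ avoids σ 0 (n - ℓ + (ℓ - 1)) := by
      rw [show n - ℓ + (ℓ - 1) = n - 1 by omega]
      exact fun h => hnC ⟨h, hocc⟩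
    obtain ⟨j, hj, hocc'⟩ := exists_consecOcc_of_not_avoidsOn hσ₁ hσ₂ this
    exact ⟨j, hj, hσ₁.mono le_rfl (by omega), hocc'⟩
  have hbound := (uniformProb_mono hE).trans (uniformProb_exists_le _ _)
  rw [Finset.sum_congr rfl fun j hj => uniformProb_avoidsOn_and_consecOcc_of_le hd v
      (by rw [Finset.mem_Ico] at hj; omega) (by rw [Finset.mem_Ico] at hj; omega),
    Finset.sum_const, Nat.card_Ico,
    show n - ℓ - (n - ℓ - d + 1) = d - 1 by omega, nsmul_eq_mul, Nat.cast_sub hd, Nat.cast_one]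
    at hbound
  have hnonneg := uniformProb_nonneg fun σ => D σ ∧ ¬ C σ
  constructor
  · linarith
  · rw [div_mul_eq_mul_div, mul_div_assoc]
    linarith
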